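/- Let μ, ν > 0 and let T be the operator on bounded measurable functions ℝ → [0,1] given by (TΨ)(t) = μν·e^{μt}·I(Ψ) for t ≤ 0 and (TΨ)(t) = μν·e^{−νt}·I(Ψ) + 1 − e^{−νt} for t > 0, where I(Ψ) = ∫₀^∞∫₀^∞ Ψ(u − v)·e^{−μu−νv} du dv. Define Ψ₁(t) = (ν/(μ+ν))·e^{μt} for t ≤ 0, Ψ₁(t) = 1 − (μ/(μ+ν))·e^{−νt} for t > 0, and Ψ_{k+1} = TΨ_k for k ≥ 1. If ν < μ, then Ψ_{k+1}(t) ≤ Ψ_k(t) for every k ≥ 1 and every real t; if ν > μ, then Ψ_{k+1}(t) ≥ Ψ_k(t) for every k ≥ 1 and every real t. -/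

import Mathlib

/-!
Every `Ψ_k` lies in the one-parameter family `F_c = twoSidedExpCDF μ ν c`, and
`T F_c = F_{φ c}` with the increasing affine map `φ c = (2μνc + ν²)/(μ+ν)²`. Since `F_c t` is
increasing in `c`, the sequence `Ψ_k = F_{φ^[k-1] c₁}`, `c₁ = ν/(μ+ν)`, is monotone in `k`, in the
direction given by the sign of `φ c₁ - c₁ = μν(ν-μ)/(μ+ν)³`.
-/

open MeasureTheory Set Real

lemma integrableOn_mul_exp_neg_mul_Ioi {a : ℝ} (ha : 0 < a) :
    IntegrableOn (fun x : ℝ => x * exp (-a * x)) (Ioi 0) := by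
  refine (integrableOn_rpow_mul_exp_neg_mul_rpow (p := 1) (s := 1) (by norm_num) one_pos
    ha).congr_fun (fun x _ => ?_) measurableSet_Ioi
  simp only [rpow_one]

lemma integral_mul_exp_neg_mul_Ioi {a : ℝ} (ha : 0 < a) :
    ∫ x in Ioi (0:ℝ), x * exp (-a * x) = 1 / a ^ 2 := by
  have h := integral_rpow_mul_exp_neg_mul_Ioi (a := 2) (r := a) two_pos ha
  norm_num [Gamma_two] at h
  simpa [neg_mul] using h

-- `μ * ν * expKernelIntegral μ ν Ψ = 𝔼[Ψ (U - V)]` for independent `U ~ Exp(μ)`, `V ~ Exp(ν)`.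
noncomputable def expKernelIntegral (μ ν : ℝ) (Ψ : ℝ → ℝ) : ℝ :=
  ∫ u in Ioi (0:ℝ), ∫ v in Ioi (0:ℝ), Ψ (u - v) * exp (-μ*u - ν*v)

/-- The distribution function of the mixture, with weights `c` and `1 - c`, of `-Exp(μ)` and
`Exp(ν)`. -/
noncomputable def twoSidedExpCDF (μ ν c t : ℝ) : ℝ :=
  if t ≤ 0 then c * exp (μ * t) else 1 - (1 - c) * exp (-ν * t)

section twoSidedExpCDF

variable {μ ν c t : ℝ}

lemma twoSidedExpCDF_of_nonpos (ht : t ≤ 0) : twoSidedExpCDF μ ν c t = c * exp (μ * t) :=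
  if_pos ht

lemma twoSidedExpCDF_of_nonneg (ht : 0 ≤ t) :
    twoSidedExpCDF μ ν c t = 1 - (1 - c) * exp (-ν * t) := by
  rcases ht.eq_or_lt with rfl | ht
  · simp [twoSidedExpCDF]
  · exact if_neg ht.not_ge

lemma continuous_twoSidedExpCDF : Continuous (twoSidedExpCDF μ ν c) :=
  Continuous.if_le (by fun_prop) (by fun_prop) continuous_id continuous_const
    fun t ht => by simp [ht]

lemma monotone_twoSidedExpCDF_weight (t : ℝ) : Monotone fun c => twoSidedExpCDF μ ν c t := by
  intro c c' hc
  simp only [twoSidedExpCDF]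
  split_ifs
  · exact mul_le_mul_of_nonneg_right hc (exp_pos _).le
  · nlinarith [exp_pos (-ν * t)]

end twoSidedExpCDF

lemma integral_twoSidedExpCDF_sub_mul_exp {μ ν : ℝ} (hμ : 0 < μ) (hν : 0 < ν) (c : ℝ)
    {u : ℝ} (hu : 0 ≤ u) :
    ∫ v in Ioi (0:ℝ), twoSidedExpCDF μ ν c (u - v) * exp (-μ*u - ν*v) =
      exp (-μ * u) / ν - exp (-(μ + ν) * u) / ν - (1 - c) * (u * exp (-(μ + ν) * u))
        + c / (μ + ν) * exp (-(μ + ν) * u) := by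
  have hμν : -(μ + ν) < 0 := by linarith
  have h_near : EqOn (fun v => twoSidedExpCDF μ ν c (u - v) * exp (-μ*u - ν*v))
      (fun v => exp (-μ * u) * exp (-ν * v) - (1 - c) * exp (-(μ + ν) * u)) (uIcc 0 u) := by
    intro v hv
    rw [uIcc_of_le hu] at hv
    dsimp only
    rw [twoSidedExpCDF_of_nonneg (sub_nonneg.2 hv.2), sub_mul, one_mul, mul_assoc, ← exp_add,
      ← exp_add]
    ring_nf
  have h_far : EqOn (fun v => twoSidedExpCDF μ ν c (u - v) * exp (-μ*u - ν*v))
      (fun v => c * exp (-(μ + ν) * v)) (Ioi u) := by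
    intro v hv
    dsimp only
    rw [twoSidedExpCDF_of_nonpos (sub_nonpos.2 (le_of_lt hv)), mul_assoc, ← exp_add]
    ring_nf
  have hint_far := IntegrableOn.congr_fun ((integrableOn_exp_mul_Ioi hμν u).const_mul c)
    h_far.symm measurableSet_Ioi
  have hcont : Continuous fun v => twoSidedExpCDF μ ν c (u - v) * exp (-μ*u - ν*v) := by
    have := continuous_twoSidedExpCDF (μ := μ) (ν := ν) (c := c)
    fun_prop
  rw [← intervalIntegral.integral_interval_add_Ioi' (hcont.intervalIntegrable 0 u) hint_far,
    intervalIntegral.integral_congr h_near, setIntegral_congr_fun measurableSet_Ioi h_far,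
    intervalIntegral.integral_sub ((by fun_prop : Continuous _).intervalIntegrable 0 u)
      intervalIntegrable_const,
    intervalIntegral.integral_const_mul, intervalIntegral.integral_const, integral_const_mul,
    ← intervalIntegral.integral_Ioi_sub_Ioi (integrableOn_exp_mul_Ioi (neg_lt_zero.2 hν) 0) hu,
    integral_exp_mul_Ioi (neg_lt_zero.2 hν), integral_exp_mul_Ioi (neg_lt_zero.2 hν),
    integral_exp_mul_Ioi hμν]
  have hsplit : exp (-(μ + ν) * u) = exp (-μ * u) * exp (-ν * u) := by
    rw [← exp_add]; ring_nf
  simp only [mul_zero, exp_zero, smul_eq_mul, hsplit]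
  field_simp
  ring

noncomputable def weightStep (μ ν c : ℝ) : ℝ := (2 * μ * ν * c + ν ^ 2) / (μ + ν) ^ 2

lemma mul_expKernelIntegral_twoSidedExpCDF {μ ν : ℝ} (hμ : 0 < μ) (hν : 0 < ν) (c : ℝ) :
    μ * ν * expKernelIntegral μ ν (twoSidedExpCDF μ ν c) = weightStep μ ν c := by
  have hμν : 0 < μ + ν := by linarith
  have i1 : IntegrableOn (fun u => exp (-μ * u) / ν) (Ioi 0) :=
    (integrableOn_exp_mul_Ioi (neg_lt_zero.2 hμ) 0).div_const ν
  have i2 : IntegrableOn (fun u => exp (-(μ + ν) * u) / ν) (Ioi 0) :=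
    (integrableOn_exp_mul_Ioi (neg_lt_zero.2 hμν) 0).div_const ν
  have i3 : IntegrableOn (fun u => (1 - c) * (u * exp (-(μ + ν) * u))) (Ioi 0) :=
    (integrableOn_mul_exp_neg_mul_Ioi hμν).const_mul (1 - c)
  have i4 : IntegrableOn (fun u => c / (μ + ν) * exp (-(μ + ν) * u)) (Ioi 0) :=
    (integrableOn_exp_mul_Ioi (neg_lt_zero.2 hμν) 0).const_mul _
  rw [expKernelIntegral, setIntegral_congr_fun measurableSet_Ioi
      fun u hu => integral_twoSidedExpCDF_sub_mul_exp hμ hν c (le_of_lt hu),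
    integral_add ?i123 i4, integral_sub ?i12 i3, integral_sub i1 i2,
    integral_div, integral_div, integral_const_mul, integral_const_mul,
    integral_exp_mul_Ioi (neg_lt_zero.2 hμ), integral_exp_mul_Ioi (neg_lt_zero.2 hμν),
    integral_mul_exp_neg_mul_Ioi hμν, weightStep]
  case i123 => exact (i1.sub i2).sub i3
  case i12 => exact i1.sub i2
  simp only [mul_zero, exp_zero]
  field_simp
  ring

lemma monotone_weightStep {μ ν : ℝ} (h : 0 ≤ μ * ν) : Monotone (weightStep μ ν) := by
  intro a b hab
  unfold weightStep
  gcongr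
  linarith

lemma weightStep_sub_self {μ ν : ℝ} (h : μ + ν ≠ 0) :
    weightStep μ ν (ν / (μ + ν)) - ν / (μ + ν) = μ * ν * (ν - μ) / (μ + ν) ^ 3 := by
  unfold weightStep
  field_simp
  ring

lemma ite_eq_twoSidedExpCDF (μ ν J t : ℝ) :
    (if t ≤ 0 then μ * ν * exp (μ * t) * J else μ * ν * exp (-ν * t) * J + 1 - exp (-ν * t)) =
      twoSidedExpCDF μ ν (μ * ν * J) t := by
  unfold twoSidedExpCDF
  split_ifs <;> ring

/-- Monotonicity of the sequence `Ψ_k` produced by the one-step recursion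
operator `T` starting from `Ψ₁`: nonincreasing in `k` if `ν < μ`, nondecreasing if `ν > μ`. -/
theorem psi_sequence_monotone (μ ν : ℝ) (hμ : 0 < μ) (hν : 0 < ν)
    (Ψ : ℕ → ℝ → ℝ)
    (hΨ₁ : ∀ t : ℝ, Ψ 1 t = if t ≤ 0 then ν/(μ+ν) * Real.exp (μ*t)
      else 1 - μ/(μ+ν) * Real.exp (-ν*t))
    (hrec : ∀ k : ℕ, 1 ≤ k → ∀ t : ℝ, Ψ (k+1) t =
      if t ≤ 0 then
        μ * ν * Real.exp (μ*t) *
          ∫ u in Set.Ioi (0:ℝ), ∫ v in Set.Ioi (0:ℝ), Ψ k (u - v) * Real.exp (-μ*u - ν*v)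
      else
        μ * ν * Real.exp (-ν*t) *
          (∫ u in Set.Ioi (0:ℝ), ∫ v in Set.Ioi (0:ℝ), Ψ k (u - v) * Real.exp (-μ*u - ν*v))
          + 1 - Real.exp (-ν*t)) :
    (ν < μ → ∀ k : ℕ, 1 ≤ k → ∀ t : ℝ, Ψ (k+1) t ≤ Ψ k t) ∧
    (μ < ν → ∀ k : ℕ, 1 ≤ k → ∀ t : ℝ, Ψ k t ≤ Ψ (k+1) t) := by
  have hμν : 0 < μ + ν := by linarith
  set c₁ := ν / (μ + ν)
  have hΨ : ∀ k, Ψ (k + 1) = twoSidedExpCDF μ ν ((weightStep μ ν)^[k] c₁) := by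
    intro k
    induction k with
    | zero =>
      funext t
      rw [hΨ₁, Function.iterate_zero_apply, twoSidedExpCDF, one_sub_div hμν.ne',
        add_sub_cancel_right]
    | succ k ih =>
      funext t
      rw [hrec (k + 1) (by omega), ite_eq_twoSidedExpCDF, ih, Function.iterate_succ_apply',
        ← mul_expKernelIntegral_twoSidedExpCDF hμ hν]
      rfl
  have hstep := weightStep_sub_self (μ := μ) (ν := ν) hμν.ne'
  have hmono := monotone_weightStep (mul_pos hμ hν).le
  refine ⟨fun hlt k hk t => ?_, fun hlt k hk t => ?_⟩
  all_goals
    obtain ⟨j, rfl⟩ := Nat.exists_eq_add_of_le' hk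
    rw [hΨ, hΨ]
    apply monotone_twoSidedExpCDF_weight
  · refine hmono.antitone_iterate_of_map_le ?_ j.le_succ
    have : μ * ν * (ν - μ) / (μ + ν) ^ 3 ≤ 0 :=
      div_nonpos_of_nonpos_of_nonneg (by nlinarith [mul_pos hμ hν]) (by positivity)
    linarith
  · refine hmono.monotone_iterate_of_le_map ?_ j.le_succ
    have : 0 ≤ μ * ν * (ν - μ) / (μ + ν) ^ 3 :=
      div_nonneg (by nlinarith [mul_pos hμ hν]) (by positivity)
    linarith
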